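/- arXiv:1712.05135 — 2 statements merged into one kernel-verified Lean document; each statement's English description precedes it below -/
import Mathlib

section
/- Fix n ≥ 1, ρ ∈ [0,1), and k ∈ {1,…,n}. Let M, Z_1,…,Z_n be i.i.d. standard normal random variables, define X_i = √ρ·M + √(1−ρ)·Z_i for i = 1,…,n, and let R = {x ∈ ℝⁿ : x_1 ≤ x_2 ≤ ⋯ ≤ x_n}. Then E[X_k | X ∈ R] = √(1−ρ)·E[Z_{(k)}], where Z_{(k)} is the k-th order statistic of Z_1,…,Z_n. -/
/-!
Since `√(1-ρ) > 0`, the event `X ∈ R` is the event that `Z` is sorted, which does not involve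
the common factor `M`. Conditioning on it therefore leaves `M` a centred Gaussian independent of
`Z`, and `E[X_k | X ∈ R] = √(1-ρ) · E[Z_k | Z sorted]`. Because the law of `Z` is invariant under
permutations of the coordinates and has no ties, the `n!` events `{Z ∘ σ strictly increasing}`
partition the sample space up to a null set and all have the same probability; so for any
symmetric function, such as `z ↦ z_(k)`, conditioning on `Z` being sorted does not change its
expectation. On that event `Z_k = Z_(k)`.
-/

open MeasureTheory ProbabilityTheory Real
open scoped ENNReal

/-- The `k`-th order statistic (0-indexed) of the tuple `z : Fin n → ℝ`:
the `(k+1)`-th smallest value among `z 0, …, z (n-1)`. -/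
noncomputable def orderStat {n : ℕ} (z : Fin n → ℝ) (k : Fin n) : ℝ :=
  z (Tuple.sort z k)

open Set Function
open scoped Nat

section OrderStatistics

variable {n : ℕ}

lemma orderStat_comp_perm (x : Fin n → ℝ) (σ : Equiv.Perm (Fin n)) (k : Fin n) :
    orderStat (x ∘ σ) k = orderStat x k :=
  congrFun (Tuple.comp_perm_comp_sort_eq_comp_sort (f := x) (σ := σ)) k

lemma orderStat_of_monotone {x : Fin n → ℝ} (hx : Monotone x) (k : Fin n) :
    orderStat x k = x k := by
  rw [orderStat, Tuple.sort_eq_refl_iff_monotone.mpr hx, Equiv.refl_apply]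

lemma measurableSet_setOf_sort_eq (σ : Equiv.Perm (Fin n)) :
    MeasurableSet {x : Fin n → ℝ | Tuple.sort x = σ} := by
  simp only [eq_comm (a := Tuple.sort _), Tuple.eq_sort_iff, Monotone, ofPred_and, ofPred_forall]
  measurability

lemma measurable_orderStat (k : Fin n) : Measurable fun x : Fin n → ℝ => orderStat x k := by
  let : MeasurableSpace (Equiv.Perm (Fin n)) := ⊤
  have hsort : Measurable (Tuple.sort : (Fin n → ℝ) → Equiv.Perm (Fin n)) :=
    measurable_to_countable' measurableSet_setOf_sort_eq
  exact (measurable_from_prod_countable_right (f := fun p : Equiv.Perm (Fin n) × (Fin n → ℝ) =>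
    p.2 (p.1 k)) fun σ => measurable_pi_apply (σ k)).comp (hsort.prodMk measurable_id)

lemma integrable_orderStat {μ : Measure (Fin n → ℝ)} (h : ∀ i, Integrable (fun x => x i) μ)
    (k : Fin n) : Integrable (fun x => orderStat x k) μ := by
  refine (integrable_finsetSum Finset.univ fun i _ => (h i).abs).mono'
    (measurable_orderStat k).aestronglyMeasurable (ae_of_all _ fun x => ?_)
  exact Finset.single_le_sum (f := fun i => |x i|) (fun i _ => abs_nonneg _)
    (Finset.mem_univ (Tuple.sort x k))

end OrderStatistics

section Exchangeable

variable {n : ℕ} {μ : Measure (Fin n → ℝ)}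

lemma measurableSet_setOf_monotone : MeasurableSet {x : Fin n → ℝ | Monotone x} := by
  simp only [Monotone, ofPred_forall]
  measurability

lemma measurableSet_setOf_strictMono : MeasurableSet {x : Fin n → ℝ | StrictMono x} := by
  simp only [StrictMono, ofPred_forall]
  measurability

lemma eq_sort_of_strictMono_comp {x : Fin n → ℝ} {σ : Equiv.Perm (Fin n)}
    (h : StrictMono (x ∘ σ)) : σ = Tuple.sort x :=
  Tuple.eq_sort_iff.mpr ⟨h.monotone, fun _ _ hij heq => absurd heq (h hij).ne⟩

lemma pairwise_disjoint_setOf_strictMono_comp :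
    Pairwise (Disjoint on fun σ : Equiv.Perm (Fin n) => {x : Fin n → ℝ | StrictMono (x ∘ σ)}) :=
  fun _ _ hστ => disjoint_left.2 fun _ hσ hτ =>
    hστ ((eq_sort_of_strictMono_comp hσ).trans (eq_sort_of_strictMono_comp hτ).symm)

lemma strictMono_comp_sort {x : Fin n → ℝ} (hx : Injective x) :
    StrictMono (x ∘ Tuple.sort x) :=
  (Tuple.monotone_sort x).strictMono_of_injective (hx.comp (Equiv.injective _))

section

variable (hties : ∀ i j, i ≠ j → μ {x | x i = x j} = 0)
include hties

lemma ae_injective : ∀ᵐ x ∂μ, Injective x := by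
  have : ∀ i j, ∀ᵐ x ∂μ, i ≠ j → x i ≠ x j := fun i j => by
    by_cases hij : i = j
    · simp [hij]
    · exact measure_mono_null (fun x hx => by simpa [hij] using hx) (hties i j hij)
  filter_upwards [ae_all_iff.2 fun i => ae_all_iff.2 (this i)] with x hx
  exact fun i j hxij => by_contra fun hij => hx i j hij hxij

lemma setOf_monotone_ae_eq_setOf_strictMono :
    {x : Fin n → ℝ | Monotone x} =ᵐ[μ] {x | StrictMono x} := by
  filter_upwards [ae_injective hties] with x hx
  exact propext ⟨fun h => h.strictMono_of_injective hx, StrictMono.monotone⟩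

variable (hexch : ∀ σ : Equiv.Perm (Fin n), μ.map (· ∘ σ) = μ)
include hexch

lemma integral_eq_factorial_mul_setIntegral_monotone {f : (Fin n → ℝ) → ℝ} (hf : Integrable f μ)
    (hsymm : ∀ (σ : Equiv.Perm (Fin n)) x, f (x ∘ σ) = f x) :
    ∫ x, f x ∂μ = n ! * ∫ x in {x | Monotone x}, f x ∂μ := by
  have hperm : ∀ σ : Equiv.Perm (Fin n), Measurable fun x : Fin n → ℝ => x ∘ σ := fun _ => by
    fun_prop
  have hcell : ∀ σ : Equiv.Perm (Fin n),
      ∫ x in {x | StrictMono (x ∘ σ)}, f x ∂μ = ∫ x in {x | StrictMono x}, f x ∂μ := fun σ =>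
    calc ∫ x in {x | StrictMono (x ∘ σ)}, f x ∂μ
        = ∫ x in (· ∘ σ) ⁻¹' {x | StrictMono x}, f (x ∘ σ) ∂μ := by simp only [hsymm]; rfl
      _ = ∫ x in {x | StrictMono x}, f x ∂μ.map (· ∘ σ) :=
        (setIntegral_map measurableSet_setOf_strictMono
          (by rw [hexch σ]; exact hf.aestronglyMeasurable) (hperm σ).aemeasurable).symm
      _ = ∫ x in {x | StrictMono x}, f x ∂μ := by rw [hexch σ]
  have hcover :
      (univ : Set (Fin n → ℝ)) =ᵐ[μ] ⋃ σ : Equiv.Perm (Fin n), {x | StrictMono (x ∘ σ)} := by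
    filter_upwards [ae_injective hties] with x hx
    exact propext ⟨fun _ => mem_iUnion.2 ⟨_, strictMono_comp_sort hx⟩, fun _ => trivial⟩
  calc ∫ x, f x ∂μ
      = ∫ x in ⋃ σ : Equiv.Perm (Fin n), {x | StrictMono (x ∘ σ)}, f x ∂μ := by
        rw [← setIntegral_univ, setIntegral_congr_set hcover]
    _ = ∑ σ : Equiv.Perm (Fin n), ∫ x in {x | StrictMono (x ∘ σ)}, f x ∂μ :=
        integral_iUnion_fintype (fun σ => measurableSet_setOf_strictMono.preimage (hperm σ))
          pairwise_disjoint_setOf_strictMono_comp fun _ => hf.integrableOn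
    _ = n ! * ∫ x in {x | Monotone x}, f x ∂μ := by
        simp only [hcell, Finset.sum_const, Finset.card_univ, Fintype.card_perm, Fintype.card_fin,
          nsmul_eq_mul, setIntegral_congr_set (setOf_monotone_ae_eq_setOf_strictMono hties)]

variable [IsProbabilityMeasure μ]

lemma measureReal_setOf_monotone : μ.real {x | Monotone x} = (n ! : ℝ)⁻¹ := by
  have h := integral_eq_factorial_mul_setIntegral_monotone hties hexch (integrable_const (1 : ℝ))
    fun _ _ => rfl
  simp only [integral_const, measureReal_restrict_apply_univ, probReal_univ, smul_eq_mul,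
    mul_one] at h
  exact eq_inv_of_mul_eq_one_right h.symm

lemma measure_setOf_monotone_ne_zero : μ {x | Monotone x} ≠ 0 := fun h => by
  have := measureReal_setOf_monotone hties hexch
  rw [measureReal_def, h, ENNReal.toReal_zero] at this
  exact absurd this.symm (by positivity)

lemma integral_cond_setOf_monotone {f : (Fin n → ℝ) → ℝ} (hf : Integrable f μ)
    (hsymm : ∀ (σ : Equiv.Perm (Fin n)) x, f (x ∘ σ) = f x) :
    ∫ x, f x ∂μ[|{x | Monotone x}] = ∫ x, f x ∂μ := by
  rw [ProbabilityTheory.cond, integral_smul_measure, ENNReal.toReal_inv, ← measureReal_def,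
    measureReal_setOf_monotone hties hexch,
    integral_eq_factorial_mul_setIntegral_monotone hties hexch hf hsymm, inv_inv, smul_eq_mul]

lemma integral_eval_cond_setOf_monotone (hint : ∀ i, Integrable (fun x => x i) μ) (k : Fin n) :
    ∫ x, x k ∂μ[|{x | Monotone x}] = ∫ x, orderStat x k ∂μ := by
  rw [← integral_cond_setOf_monotone hties hexch (integrable_orderStat hint k)
    fun σ x => orderStat_comp_perm x σ k]
  exact integral_congr_ae <| (ae_cond_mem measurableSet_setOf_monotone).mono
    fun x hx => (orderStat_of_monotone hx k).symm

end

end Exchangeable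

lemma ProbabilityTheory.IndepFun.measure_setOf_eq_eq_zero {Ω β : Type*} [MeasurableSpace Ω]
    [MeasurableSpace β] [MeasurableEq β] {P : Measure Ω} [IsProbabilityMeasure P] {X Y : Ω → β}
    (hXY : IndepFun X Y P) (hX : Measurable X) (hY : Measurable Y)
    [NullSingletonClass (P.map X)] : P {ω | X ω = Y ω} = 0 := by
  have hdiag : {ω | X ω = Y ω} = (fun ω => (X ω, Y ω)) ⁻¹' diagonal β := rfl
  rw [hdiag, ← Measure.map_apply (hX.prodMk hY) measurableSet_diagonal,
    (indepFun_iff_map_prod_eq_prod_map_map hX.aemeasurable hY.aemeasurable).1 hXY,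
    Measure.prod_apply_symm measurableSet_diagonal]
  simp [preimage, diagonal]

section Pi

variable {ι β : Type*} [Fintype ι] [MeasurableSpace β] (ν : Measure β)

lemma map_comp_perm_pi [SigmaFinite ν] (σ : Equiv.Perm ι) :
    (Measure.pi fun _ : ι => ν).map (· ∘ σ) = Measure.pi fun _ => ν := by
  convert (measurePreserving_piCongrLeft (fun _ : ι => ν) σ.symm).map_eq using 2
  ext x i
  simp [MeasurableEquiv.coe_piCongrLeft, Equiv.piCongrLeft_apply]

lemma pi_setOf_apply_eq_apply_eq_zero [MeasurableEq β] [IsProbabilityMeasure ν]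
    [NullSingletonClass ν] {i j : ι} (hij : i ≠ j) :
    Measure.pi (fun _ : ι => ν) {x | x i = x j} = 0 := by
  have : NullSingletonClass ((Measure.pi fun _ : ι => ν).map (eval i)) := by
    rw [(measurePreserving_eval (fun _ : ι => ν) i).map_eq]
    infer_instance
  exact ((iIndepFun_pi (X := fun _ => id) fun _ => aemeasurable_id).indepFun hij
    ).measure_setOf_eq_eq_zero (measurable_pi_apply i) (measurable_pi_apply j)

end Pi

section IID

variable {n : ℕ} {ν : Measure ℝ} [IsProbabilityMeasure ν] [NullSingletonClass ν]

lemma isProbabilityMeasure_cond_setOf_monotone_pi :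
    IsProbabilityMeasure (Measure.pi fun _ : Fin n => ν)[|{x | Monotone x}] :=
  cond_isProbabilityMeasure <| measure_setOf_monotone_ne_zero
    (fun _ _ => pi_setOf_apply_eq_apply_eq_zero ν) (map_comp_perm_pi ν)

lemma integral_eval_cond_setOf_monotone_pi (hν : Integrable id ν) (k : Fin n) :
    ∫ x, x k ∂(Measure.pi fun _ => ν)[|{x | Monotone x}]
      = ∫ x, orderStat x k ∂Measure.pi fun _ => ν :=
  integral_eval_cond_setOf_monotone (fun _ _ => pi_setOf_apply_eq_apply_eq_zero ν)
    (map_comp_perm_pi ν) (fun _ => integrable_eval hν) k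

end IID

lemma ProbabilityTheory.cond_map {α β : Type*} [MeasurableSpace α] [MeasurableSpace β]
    {μ : Measure α} {f : α → β} (hf : Measurable f) {s : Set β} (hs : MeasurableSet s) :
    (μ.map f)[|s] = (μ[|f ⁻¹' s]).map f := by
  rw [ProbabilityTheory.cond, ProbabilityTheory.cond, Measure.map_smul,
    Measure.restrict_map hf hs, Measure.map_apply hf hs]

lemma MeasureTheory.Integrable.cond {α E : Type*} [MeasurableSpace α] [NormedAddCommGroup E]
    {μ : Measure α} {f : α → E} (hf : Integrable f μ) (s : Set α) : Integrable f μ[|s] := by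
  by_cases hs : μ s = 0
  · simp [cond_eq_zero_of_meas_eq_zero hs]
  · exact hf.integrableOn.smul_measure (ENNReal.inv_ne_top.2 hs)

lemma ProbabilityTheory.cond_univ_prod {α β : Type*} [MeasurableSpace α] [MeasurableSpace β]
    (μ : Measure α) [IsProbabilityMeasure μ] (ν : Measure β) [SFinite ν] (t : Set β) :
    (μ.prod ν)[|univ ×ˢ t] = μ.prod (ν[|t]) := by
  rw [ProbabilityTheory.cond, ProbabilityTheory.cond, Measure.prod_smul_right,
    ← Measure.prod_restrict, Measure.prod_prod, Measure.restrict_univ, measure_univ, one_mul]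

lemma integral_prod_fst_add_snd {α β E : Type*} [MeasurableSpace α] [MeasurableSpace β]
    [NormedAddCommGroup E] [NormedSpace ℝ E]
    {μ : Measure α} {ν : Measure β} [IsProbabilityMeasure μ] [IsProbabilityMeasure ν]
    {f : α → E} {g : β → E} (hf : Integrable f μ) (hg : Integrable g ν) :
    ∫ p, f p.1 + g p.2 ∂μ.prod ν = ∫ x, f x ∂μ + ∫ y, g y ∂ν := by
  rw [integral_add (hf.comp_fst ν) (hg.comp_snd μ), integral_fun_fst, integral_fun_snd]
  simp

lemma map_head_tail_eq_prod_pi {Ω β : Type*} [MeasurableSpace Ω] [MeasurableSpace β]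
    {P : Measure Ω} [IsProbabilityMeasure P] {ν : Measure β} [IsProbabilityMeasure ν] {n : ℕ}
    {W : Fin (n + 1) → Ω → β} (hmeas : ∀ i, Measurable (W i)) (hindep : iIndepFun W P)
    (hdist : ∀ i, P.map (W i) = ν) :
    P.map (fun ω => (W 0 ω, fun i : Fin n => W i.succ ω)) = ν.prod (Measure.pi fun _ => ν) := by
  have hjoint : P.map (fun ω i => W i ω) = Measure.pi fun _ => ν := by
    rw [(iIndepFun_iff_map_fun_eq_pi_map fun i => (hmeas i).aemeasurable).1 hindep]
    simp only [hdist]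
  have hsplit := measurePreserving_piFinSuccAbove (fun _ : Fin (n + 1) => ν) 0
  rw [← hjoint] at hsplit
  rw [← hsplit.map_eq,
    Measure.map_map (MeasurableEquiv.measurable _) (measurable_pi_lambda _ hmeas)]
  rfl

theorem stmt5_general {Ω : Type*} [MeasureSpace Ω] (hP : IsProbabilityMeasure (ℙ : Measure Ω))
    (n : ℕ) (ρ : ℝ) (hρ1 : ρ < 1)
    (M : Ω → ℝ) (Z : Fin n → Ω → ℝ)
    (W : Fin (n + 1) → Ω → ℝ) (hW : W = Fin.cons M Z)
    (hmeas : ∀ i, Measurable (W i))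
    (hindep : iIndepFun W ℙ)
    (hdist : ∀ i, Measure.map (W i) ℙ = gaussianReal 0 1)
    (X : Fin n → Ω → ℝ)
    (hX : ∀ i ω, X i ω = Real.sqrt ρ * M ω + Real.sqrt (1 - ρ) * Z i ω)
    (k : Fin n) :
    ∫ ω, X k ω ∂(ℙ[|{ω | Monotone fun i => X i ω}])
      = Real.sqrt (1 - ρ) * ∫ ω, orderStat (fun i => Z i ω) k ∂ℙ := by
  subst hW
  set ν := gaussianReal 0 1
  set μ := Measure.pi fun _ : Fin n => ν
  have : NullSingletonClass ν := nullSingletonClass_gaussianReal one_ne_zero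
  have : IsProbabilityMeasure μ[|{x | Monotone x}] := isProbabilityMeasure_cond_setOf_monotone_pi
  set MZ : Ω → ℝ × (Fin n → ℝ) := fun ω => (M ω, fun i => Z i ω)
  have hMZ : Measurable MZ := (hmeas 0).prodMk (measurable_pi_lambda _ fun i => hmeas i.succ)
  have hlaw : Measure.map MZ ℙ = ν.prod μ := map_head_tail_eq_prod_pi hmeas hindep hdist
  have hevent : {ω | Monotone fun i => X i ω} = MZ ⁻¹' (univ ×ˢ {x | Monotone x}) := by
    ext ω
    simp [MZ, Monotone, hX, Real.sqrt_pos.2 (sub_pos.2 hρ1)]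
  calc ∫ ω, X k ω ∂ℙ[|{ω | Monotone fun i => X i ω}]
      = ∫ p, √ρ * p.1 + √(1 - ρ) * p.2 k ∂(Measure.map MZ ℙ)[|univ ×ˢ {x | Monotone x}] := by
        rw [hevent, cond_map hMZ (MeasurableSet.univ.prod measurableSet_setOf_monotone),
          integral_map hMZ.aemeasurable (by fun_prop)]
        simp only [hX, MZ]
    _ = √ρ * ∫ x, x ∂ν + √(1 - ρ) * ∫ x, x k ∂μ[|{x | Monotone x}] := by
        rw [hlaw, cond_univ_prod, integral_prod_fst_add_snd (f := fun x => √ρ * x)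
          (g := fun x : Fin n → ℝ => √(1 - ρ) * x k) (IsGaussian.integrable_fun_id.const_mul _)
          (((integrable_eval IsGaussian.integrable_id).cond _).const_mul _),
          integral_const_mul, integral_const_mul]
    _ = √(1 - ρ) * ∫ x, orderStat x k ∂μ := by
        rw [integral_id_gaussianReal, integral_eval_cond_setOf_monotone_pi IsGaussian.integrable_id]
        ring
    _ = √(1 - ρ) * ∫ ω, orderStat (fun i => Z i ω) k ∂ℙ := by
        have hsnd : ∫ x, orderStat x k ∂μ = ∫ p, orderStat p.2 k ∂Measure.map MZ ℙ := by
          rw [hlaw, integral_fun_snd (fun x => orderStat x k), probReal_univ, one_smul]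
        rw [hsnd, integral_map (f := fun p => orderStat p.2 k) hMZ.aemeasurable
          ((measurable_orderStat k).comp measurable_snd).aestronglyMeasurable]

/-- One-factor model: `M, Z_1, …, Z_n` i.i.d. standard normal,
`X i = √ρ·M + √(1-ρ)·Z i` (indices `0,…,n-1` representing `1,…,n`), and
`R = {x : x_1 ≤ ⋯ ≤ x_n}`.  Then `E[X_k | X ∈ R] = √(1-ρ)·E[Z_(k)]`. -/
theorem stmt5 {Ω : Type*} [MeasureSpace Ω] (hP : IsProbabilityMeasure (ℙ : Measure Ω))
    (n : ℕ) (hn : 1 ≤ n) (ρ : ℝ) (hρ0 : 0 ≤ ρ) (hρ1 : ρ < 1)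
    (M : Ω → ℝ) (Z : Fin n → Ω → ℝ)
    (W : Fin (n + 1) → Ω → ℝ) (hW : W = Fin.cons M Z)
    (hmeas : ∀ i, Measurable (W i))
    (hindep : iIndepFun W ℙ)
    (hdist : ∀ i, Measure.map (W i) ℙ = gaussianReal 0 1)
    (X : Fin n → Ω → ℝ)
    (hX : ∀ i ω, X i ω = Real.sqrt ρ * M ω + Real.sqrt (1 - ρ) * Z i ω)
    (k : Fin n) :
    ∫ ω, X k ω ∂(ℙ[|{ω | Monotone fun i => X i ω}])
      = Real.sqrt (1 - ρ) * ∫ ω, orderStat (fun i => Z i ω) k ∂ℙ :=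
  stmt5_general hP n ρ hρ1 M Z W hW hmeas hindep hdist X hX k
end

section
/- Fix n ≥ 1, ρ ∈ [0,1), real numbers μ_1,…,μ_n, and positive reals σ_1,…,σ_n. Let M, Z_1,…,Z_n be i.i.d. standard normal random variables and define X_i = σ_i(√ρ·M + √(1−ρ)·Z_i) + μ_i. Let φ be the standard normal density, and for m ∈ ℝ let φ_i(m,·) be the density of N(μ_i + σ_i√ρ·m, σ_i²(1−ρ)). Define b_0(m,x) = 1 and, for i = 1,…,n−1, b_i(m,x) = ∫_{−∞}^{x} b_{i−1}(m,t)·φ_i(m,t) dt. Then P(X_1 ≤ X_2 ≤ ⋯ ≤ X_n) = ∫_{−∞}^{∞} ∫_{−∞}^{∞} φ(m)·b_{n−1}(m,x)·φ_n(m,x) dx dm. -/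
/-!
Conditionally on `M = m` the `Xᵢ` are independent with laws `N(μᵢ + σᵢ√ρ m, σᵢ²(1-ρ))`, so
`P(X₁ ≤ ⋯ ≤ Xₙ) = ∫ φ(m) P(Y₁ ≤ ⋯ ≤ Yₙ) dm` for independent `Yᵢ` with densities `φᵢ(m, ·)`.
For such `Yᵢ`, `b_k(x) = P(Y₁ ≤ ⋯ ≤ Y_k ≤ x)`: splitting off the last coordinate with Fubini gives
`P(Y₁ ≤ ⋯ ≤ Y_{k+1} ≤ x) = ∫_{-∞}^x P(Y₁ ≤ ⋯ ≤ Y_k ≤ t) φ_{k+1}(m, t) dt`, which is the recursion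
defining `b_{k+1}`; with `x = ∞` it gives the inner integral of the formula.
-/

open MeasureTheory ProbabilityTheory Real
open scoped ENNReal NNReal

/-- Density of the normal distribution `N(m, v)` (mean `m`, variance `v`). -/
noncomputable def normalPDF (m v x : ℝ) : ℝ :=
  (Real.sqrt (2 * Real.pi * v))⁻¹ * Real.exp (-((x - m) ^ 2) / (2 * v))

/-- The recursion `b_0(m,x) = 1`, `b_i(m,x) = ∫_{-∞}^x b_{i-1}(m,t)·φ_i(m,t) dt`,
where `φseq i` is the density `φ_{i+1}` of the `(i+1)`-th coordinate given the
common factor value `m` (0-indexed). -/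
noncomputable def bRec (φseq : ℕ → ℝ → ℝ → ℝ) : ℕ → ℝ → ℝ → ℝ
  | 0, _, _ => 1
  | i + 1, m, x => ∫ t in Set.Iic x, bRec φseq i m t * φseq i m t

namespace Fin

variable {α : Type*} [Preorder α] {n : ℕ}

theorem monotone_snoc_iff {f : Fin n → α} {x : α} :
    Monotone (snoc f x : Fin (n + 1) → α) ↔ Monotone f ∧ ∀ i, f i ≤ x := by
  refine ⟨fun h => ⟨fun i j hij => ?_, fun i => ?_⟩, fun ⟨hf, hx⟩ i j hij => ?_⟩
  · simpa using h (castSucc_le_castSucc_iff.2 hij)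
  · simpa using h (le_last i.castSucc)
  · induction j using lastCases with
    | last => induction i using lastCases with
      | last => simp
      | cast i => simpa using hx i
    | cast j => induction i using lastCases with
      | last => exact absurd hij (castSucc_lt_last j).not_ge
      | cast i => simpa using hf (castSucc_le_castSucc_iff.1 hij)

theorem monotone_snoc_snoc_iff {f : Fin n → α} {t x : α} :
    Monotone (snoc (snoc f t : Fin (n + 1) → α) x : Fin (n + 2) → α) ↔
      Monotone (snoc f t : Fin (n + 1) → α) ∧ t ≤ x := by
  rw [monotone_snoc_iff]
  refine and_congr_right fun h => ⟨fun hx => by simpa using hx (last n), fun htx i => ?_⟩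
  exact (h (le_last i)).trans (by simpa using htx)

end Fin

theorem measurableSet_setOf_monotone_s14 {ι α : Type*} [Countable ι] [Preorder ι] [MeasurableSpace α]
    [TopologicalSpace α] [PartialOrder α] [OrderClosedTopology α] [SecondCountableTopology α]
    [OpensMeasurableSpace α] :
    MeasurableSet {f : ι → α | Monotone f} := by
  simp only [Monotone, Set.ofPred_forall]
  exact .iInter fun i => .iInter fun j => .iInter fun _ =>
    measurableSet_le (measurable_pi_apply i) (measurable_pi_apply j)

theorem measure_pi_eq_lintegral_snoc {α : Type*} [MeasurableSpace α] {n : ℕ}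
    (μ : Fin (n + 1) → Measure α) [∀ i, SigmaFinite (μ i)] {S : Set (Fin (n + 1) → α)}
    (hS : MeasurableSet S) :
    Measure.pi μ S =
      ∫⁻ t, Measure.pi (fun j => μ j.castSucc) {z | Fin.snoc z t ∈ S} ∂μ (Fin.last n) := by
  have e := (measurePreserving_piFinSuccAbove μ (Fin.last n)).symm
  rw [← e.measure_preimage hS.nullMeasurableSet, Measure.prod_apply (e.measurable hS)]
  simp only [Fin.succAbove_last, MeasurableEquiv.piFinSuccAbove_symm_apply, Fin.insertNthEquiv,
    Fin.insertNth_last', Equiv.coe_fn_mk]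
  rfl

noncomputable abbrev densityMeasure (f : ℝ → ℝ) : Measure ℝ :=
  volume.withDensity fun t => ENNReal.ofReal (f t)

structure IsProbDensity (f : ℝ → ℝ) : Prop where
  measurable : Measurable f
  nonneg : ∀ t, 0 ≤ f t
  isProbabilityMeasure : IsProbabilityMeasure (densityMeasure f)

theorem IsProbDensity.setIntegral_mul {f : ℝ → ℝ} (hf : IsProbDensity f) (g : ℝ → ℝ)
    {s : Set ℝ} (hs : MeasurableSet s) :
    ∫ t in s, g t * f t = ∫ t in s, g t ∂densityMeasure f := by
  rw [restrict_withDensity hs, integral_withDensity_eq_integral_toReal_smul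
    hf.measurable.ennreal_ofReal (ae_of_all _ fun _ => ENNReal.ofReal_lt_top)]
  simp_rw [ENNReal.toReal_ofReal (hf.nonneg _), smul_eq_mul, mul_comm]

theorem integrable_of_monotone_of_mem_Icc {f : ℝ → ℝ} (hf : Monotone f)
    (hf01 : ∀ x, f x ∈ Set.Icc (0 : ℝ) 1) (ν : Measure ℝ) [IsFiniteMeasure ν] :
    Integrable f ν :=
  .of_bound hf.measurable.aestronglyMeasurable 1 <| ae_of_all _ fun x => by
    rw [Real.norm_of_nonneg (hf01 x).1]; exact (hf01 x).2

section bRec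

variable {φseq : ℕ → ℝ → ℝ → ℝ} {m : ℝ}

theorem bRec_succ_eq_setIntegral {k : ℕ} (hφ : IsProbDensity (φseq k m)) (x : ℝ) :
    bRec φseq (k + 1) m x = ∫ t in Set.Iic x, bRec φseq k m t ∂densityMeasure (φseq k m) :=
  hφ.setIntegral_mul _ measurableSet_Iic

theorem bRec_mem_Icc {k : ℕ} (hφ : ∀ i < k, IsProbDensity (φseq i m)) (x : ℝ) :
    bRec φseq k m x ∈ Set.Icc (0 : ℝ) 1 := by
  induction k generalizing x with
  | zero => exact ⟨zero_le_one, le_rfl⟩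
  | succ k ih =>
    have hφk := hφ k k.lt_succ_self
    have := hφk.isProbabilityMeasure
    have ih' := ih (fun i hi => hφ i (by omega))
    rw [bRec_succ_eq_setIntegral hφk]
    refine ⟨setIntegral_nonneg measurableSet_Iic fun t _ => (ih' t).1, ?_⟩
    calc ∫ t in Set.Iic x, bRec φseq k m t ∂densityMeasure (φseq k m)
        ≤ 1 * (densityMeasure (φseq k m)).real (Set.Iic x) :=
          (Real.le_norm_self _).trans <| norm_setIntegral_le_of_norm_le_const_ae
            (measure_lt_top _ _) (ae_of_all _ fun t => by
              rw [Real.norm_of_nonneg (ih' t).1]; exact (ih' t).2)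
      _ ≤ 1 := by rw [one_mul]; exact measureReal_le_one

theorem bRec_monotone {k : ℕ} (hφ : ∀ i < k, IsProbDensity (φseq i m)) :
    Monotone (bRec φseq k m) := by
  induction k with
  | zero => exact monotone_const
  | succ k ih =>
    have hφk := hφ k k.lt_succ_self
    have := hφk.isProbabilityMeasure
    have hφ' : ∀ i < k, IsProbDensity (φseq i m) := fun i hi => hφ i (by omega)
    intro x y hxy
    rw [bRec_succ_eq_setIntegral hφk, bRec_succ_eq_setIntegral hφk]
    exact setIntegral_mono_set
      (integrable_of_monotone_of_mem_Icc (ih hφ') (bRec_mem_Icc hφ') _).integrableOn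
      (ae_of_all _ fun t => (bRec_mem_Icc hφ' t).1) (Set.Iic_subset_Iic.2 hxy).eventuallyLE

theorem integrable_bRec {k : ℕ} (hφ : ∀ i < k, IsProbDensity (φseq i m)) (ν : Measure ℝ)
    [IsFiniteMeasure ν] : Integrable (bRec φseq k m) ν :=
  integrable_of_monotone_of_mem_Icc (bRec_monotone hφ) (bRec_mem_Icc hφ) ν

theorem setLIntegral_ofReal_bRec {k : ℕ} (hφ : ∀ i < k + 1, IsProbDensity (φseq i m))
    {s : Set ℝ} (hs : MeasurableSet s) :
    ∫⁻ t in s, ENNReal.ofReal (bRec φseq k m t) ∂densityMeasure (φseq k m) =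
      ENNReal.ofReal (∫ t in s, bRec φseq k m t * φseq k m t) := by
  have hφk := hφ k k.lt_succ_self
  have := hφk.isProbabilityMeasure
  have hφ' : ∀ i < k, IsProbDensity (φseq i m) := fun i hi => hφ i (by omega)
  rw [hφk.setIntegral_mul _ hs, ofReal_integral_eq_lintegral_ofReal
    (integrable_bRec hφ' _).integrableOn (ae_of_all _ fun t => (bRec_mem_Icc hφ' t).1)]

-- `Monotone (Fin.snoc y x)` encodes the event `y₁ ≤ ⋯ ≤ y_k ≤ x`.
theorem measure_pi_monotone_snoc_eq_bRec {k : ℕ} (hφ : ∀ i < k, IsProbDensity (φseq i m))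
    (x : ℝ) :
    Measure.pi (fun i : Fin k => densityMeasure (φseq i m))
        {y | Monotone (Fin.snoc y x : Fin (k + 1) → ℝ)} =
      ENNReal.ofReal (bRec φseq k m x) := by
  induction k generalizing x with
  | zero => simp [bRec, Subsingleton.monotone]
  | succ k ih =>
    have hS : MeasurableSet {y : Fin (k + 1) → ℝ | Monotone (Fin.snoc y x : Fin (k + 2) → ℝ)} :=
      measurableSet_setOf_monotone_s14.preimage (by fun_prop)
    rw [measure_pi_eq_lintegral_snoc _ hS, bRec, ← setLIntegral_ofReal_bRec hφ measurableSet_Iic,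
      ← lintegral_indicator measurableSet_Iic]
    simp only [Fin.val_castSucc, Fin.val_last]
    refine lintegral_congr fun t => ?_
    by_cases htx : t ≤ x
    · simp [Fin.monotone_snoc_snoc_iff, htx, ih (fun i hi => hφ i (by omega))]
    · simp [Fin.monotone_snoc_snoc_iff, htx]

theorem measure_pi_monotone_eq_integral_bRec {k : ℕ}
    (hφ : ∀ i < k + 1, IsProbDensity (φseq i m)) :
    Measure.pi (fun i : Fin (k + 1) => densityMeasure (φseq i m)) {y | Monotone y} =
      ENNReal.ofReal (∫ t, bRec φseq k m t * φseq k m t) := by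
  rw [measure_pi_eq_lintegral_snoc _ measurableSet_setOf_monotone_s14, ← setIntegral_univ,
    ← setLIntegral_ofReal_bRec hφ MeasurableSet.univ, Measure.restrict_univ]
  simp only [Fin.val_castSucc, Fin.val_last, Set.mem_ofPred_eq,
    measure_pi_monotone_snoc_eq_bRec (k := k) fun i hi => hφ i (by omega)]

end bRec

theorem densityMeasure_gaussianPDFReal (a : ℝ) {v : ℝ≥0} (hv : v ≠ 0) :
    densityMeasure (gaussianPDFReal a v) = gaussianReal a v :=
  (gaussianReal_of_var_ne_zero a hv).symm

theorem isProbDensity_gaussianPDFReal (a : ℝ) {v : ℝ≥0} (hv : v ≠ 0) :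
    IsProbDensity (gaussianPDFReal a v) where
  measurable := measurable_gaussianPDFReal a v
  nonneg := gaussianPDFReal_nonneg a v
  isProbabilityMeasure := by rw [densityMeasure_gaussianPDFReal a hv]; infer_instance

theorem gaussianReal_map_affine (d c : ℝ) :
    (gaussianReal 0 1).map (fun t => d * t + c) = gaussianReal c (.mk (d ^ 2) (sq_nonneg d)) := by
  have : (fun t : ℝ => d * t + c) = (· + c) ∘ (d * ·) := rfl
  rw [this, ← Measure.map_map (measurable_add_const c) (measurable_const_mul d),
    gaussianReal_map_const_mul, gaussianReal_map_add_const]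
  congr 1
  · ring
  · exact mul_one _

theorem measure_pi_preimage_affine_gaussianReal {ι : Type*} [Fintype ι] (d c : ι → ℝ)
    {S : Set (ι → ℝ)} (hS : MeasurableSet S) :
    Measure.pi (fun _ : ι => gaussianReal 0 1) ((fun z i => d i * z i + c i) ⁻¹' S) =
      Measure.pi (fun i => gaussianReal (c i) (.mk (d i ^ 2) (sq_nonneg _))) S :=
  (measurePreserving_pi (fun _ => gaussianReal 0 1)
    (fun i => gaussianReal (c i) (.mk (d i ^ 2) (sq_nonneg _)))
    (f := fun i t => d i * t + c i) fun i => ⟨by fun_prop, gaussianReal_map_affine (d i) (c i)⟩)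
    |>.measure_preimage hS.nullMeasurableSet

theorem ProbabilityTheory.iIndepFun.map_head_tail_eq_prod {Ω α : Type*} [MeasurableSpace Ω]
    [MeasurableSpace α] {P : Measure Ω} {n : ℕ} {W : Fin (n + 1) → Ω → α}
    (hmeas : ∀ i, Measurable (W i)) (h : iIndepFun W P) :
    P.map (fun ω => (W 0 ω, fun i : Fin n => W i.succ ω)) =
      (P.map (W 0)).prod (Measure.pi fun i : Fin n => P.map (W i.succ)) := by
  have := h.isProbabilityMeasure
  have e := (measurePreserving_piFinSuccAbove (fun i => P.map (W i)) 0).map_eq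
  rw [← h.map_fun_eq_pi_map fun i => (hmeas i).aemeasurable,
    Measure.map_map (MeasurableEquiv.measurable _) (measurable_pi_lambda _ hmeas),
    Fin.succAbove_zero] at e
  exact e

theorem toReal_measure_pi_monotone_affine_eq_integral_bRec {φseq : ℕ → ℝ → ℝ → ℝ} {m : ℝ}
    {k : ℕ} (d c : Fin (k + 1) → ℝ) (hd : ∀ i, d i ≠ 0)
    (hφ : ∀ i : Fin (k + 1), φseq i m = gaussianPDFReal (c i) (.mk (d i ^ 2) (sq_nonneg _))) :
    (Measure.pi (fun _ => gaussianReal 0 1) {z | Monotone fun i => d i * z i + c i}).toReal =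
      ∫ x, bRec φseq k m x * φseq k m x := by
  have hv : ∀ i, (.mk (d i ^ 2) (sq_nonneg _) : ℝ≥0) ≠ 0 := fun i => by
    rw [Ne, ← NNReal.coe_eq_zero]
    exact pow_ne_zero 2 (hd i)
  have hdens : ∀ i < k + 1, IsProbDensity (φseq i m) := fun i hi => by
    simpa [hφ ⟨i, hi⟩] using isProbDensity_gaussianPDFReal (c ⟨i, hi⟩) (hv ⟨i, hi⟩)
  have hI : 0 ≤ ∫ x, bRec φseq k m x * φseq k m x := integral_nonneg fun x =>
    mul_nonneg (bRec_mem_Icc (fun i hi => hdens i (by omega)) x).1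
      ((hdens k k.lt_succ_self).nonneg x)
  rw [← ENNReal.toReal_ofReal hI, ← measure_pi_monotone_eq_integral_bRec hdens]
  simp_rw [hφ, densityMeasure_gaussianPDFReal _ (hv _)]
  exact congrArg ENNReal.toReal
    (measure_pi_preimage_affine_gaussianReal d c measurableSet_setOf_monotone_s14)

theorem toReal_measure_preimage_head_tail_eq_integral {Ω : Type*} [MeasurableSpace Ω]
    {P : Measure Ω} {n : ℕ} {W : Fin (n + 1) → Ω → ℝ} (hmeas : ∀ i, Measurable (W i))
    (hindep : iIndepFun W P) (hdist : ∀ i, P.map (W i) = gaussianReal 0 1)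
    {T : Set (ℝ × (Fin n → ℝ))} (hT : MeasurableSet T) :
    (P ((fun ω => (W 0 ω, fun i : Fin n => W i.succ ω)) ⁻¹' T)).toReal =
      ∫ m, gaussianPDFReal 0 1 m *
        (Measure.pi (fun _ : Fin n => gaussianReal 0 1) (Prod.mk m ⁻¹' T)).toReal := by
  have hlaw := hindep.map_head_tail_eq_prod hmeas
  simp only [hdist] at hlaw
  rw [← Measure.map_apply ((hmeas 0).prodMk (measurable_pi_lambda _ fun i => hmeas i.succ)) hT,
    hlaw, Measure.prod_apply hT, ← integral_toReal
      (measurable_measure_prodMk_left hT).aemeasurable (ae_of_all _ fun _ => measure_lt_top _ _),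
    integral_gaussianReal_eq_integral_smul one_ne_zero]
  simp only [smul_eq_mul]

theorem stmt14_general {Ω : Type*} [MeasureSpace Ω]
    (n : ℕ) (hn : 1 ≤ n) (ρ : ℝ) (hρ1 : ρ < 1)
    (μ : Fin n → ℝ) (σ : Fin n → ℝ) (hσ : ∀ i, 0 < σ i)
    (M : Ω → ℝ) (Z : Fin n → Ω → ℝ)
    (W : Fin (n + 1) → Ω → ℝ) (hW : W = Fin.cons M Z)
    (hmeas : ∀ i, Measurable (W i))
    (hindep : iIndepFun W ℙ)
    (hdist : ∀ i, Measure.map (W i) ℙ = gaussianReal 0 1)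
    (X : Fin n → Ω → ℝ)
    (hX : ∀ i ω, X i ω = σ i * (Real.sqrt ρ * M ω + Real.sqrt (1 - ρ) * Z i ω) + μ i)
    (φseq : ℕ → ℝ → ℝ → ℝ)
    (hφ : ∀ i : Fin n, ∀ m x,
      φseq i.val m x = normalPDF (μ i + σ i * Real.sqrt ρ * m) ((σ i) ^ 2 * (1 - ρ)) x) :
    (ℙ {ω | Monotone fun i => X i ω}).toReal
      = ∫ m, ∫ x, normalPDF 0 1 m * bRec φseq (n - 1) m x * φseq (n - 1) m x := by
  obtain ⟨k, rfl⟩ : ∃ k, n = k + 1 := ⟨n - 1, by omega⟩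
  rw [Nat.add_sub_cancel]
  set d : Fin (k + 1) → ℝ := fun i => σ i * √(1 - ρ)
  set c : ℝ → Fin (k + 1) → ℝ := fun m i => μ i + σ i * √ρ * m
  have hd : ∀ i, d i ≠ 0 := fun i => (mul_pos (hσ i) (sqrt_pos.2 (sub_pos.2 hρ1))).ne'
  have hd2 : ∀ i, d i ^ 2 = σ i ^ 2 * (1 - ρ) := fun i => by
    rw [mul_pow, sq_sqrt (sub_nonneg.2 hρ1.le)]
  set T : Set (ℝ × (Fin (k + 1) → ℝ)) := {p | Monotone fun i => d i * p.2 i + c p.1 i}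
  have hT : MeasurableSet T := measurableSet_setOf_monotone_s14.preimage (by fun_prop)
  have hevent : {ω | Monotone fun i => X i ω} = (fun ω => (W 0 ω, fun i => W i.succ ω)) ⁻¹' T := by
    have hXω : ∀ ω, (fun i => X i ω) = fun i => d i * W i.succ ω + c (W 0 ω) i :=
      fun ω => funext fun i => by simp only [hX, hW, Fin.cons_zero, Fin.cons_succ, d, c]; ring
    ext ω
    simp only [Set.mem_ofPred_eq, Set.mem_preimage, T, hXω]
  rw [hevent, toReal_measure_preimage_head_tail_eq_integral hmeas hindep hdist hT]
  congr 1 with m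
  rw [show Prod.mk m ⁻¹' T = {z | Monotone fun i => d i * z i + c m i} from rfl,
    toReal_measure_pi_monotone_affine_eq_integral_bRec (φseq := φseq) d (c m) hd
      fun i => funext fun x => by rw [hφ, ← hd2]; rfl, ← integral_const_mul]
  simp only [mul_assoc]
  rfl

/-- Recursive integration formula for the probability of the ranking event in the
one-factor model `X i = σ i·(√ρ·M + √(1-ρ)·Z i) + μ i` with `M, Z_1,…,Z_n` i.i.d.
standard normal: `P(X_1 ≤ ⋯ ≤ X_n) = ∫∫ φ(m)·b_{n-1}(m,x)·φ_n(m,x) dx dm`, where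
`φ_i(m,·)` is the density of `N(μ_i + σ_i√ρ·m, σ_i²(1-ρ))` and `φ` the standard
normal density. -/
theorem stmt14 {Ω : Type*} [MeasureSpace Ω] (hP : IsProbabilityMeasure (ℙ : Measure Ω))
    (n : ℕ) (hn : 1 ≤ n) (ρ : ℝ) (hρ0 : 0 ≤ ρ) (hρ1 : ρ < 1)
    (μ : Fin n → ℝ) (σ : Fin n → ℝ) (hσ : ∀ i, 0 < σ i)
    (M : Ω → ℝ) (Z : Fin n → Ω → ℝ)
    (W : Fin (n + 1) → Ω → ℝ) (hW : W = Fin.cons M Z)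
    (hmeas : ∀ i, Measurable (W i))
    (hindep : iIndepFun W ℙ)
    (hdist : ∀ i, Measure.map (W i) ℙ = gaussianReal 0 1)
    (X : Fin n → Ω → ℝ)
    (hX : ∀ i ω, X i ω = σ i * (Real.sqrt ρ * M ω + Real.sqrt (1 - ρ) * Z i ω) + μ i)
    (φseq : ℕ → ℝ → ℝ → ℝ)
    (hφ : ∀ i : Fin n, ∀ m x,
      φseq i.val m x = normalPDF (μ i + σ i * Real.sqrt ρ * m) ((σ i) ^ 2 * (1 - ρ)) x) :
    (ℙ {ω | Monotone fun i => X i ω}).toReal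
      = ∫ m, ∫ x, normalPDF 0 1 m * bRec φseq (n - 1) m x * φseq (n - 1) m x :=
  stmt14_general n hn ρ hρ1 μ σ hσ M Z W hW hmeas hindep hdist X hX φseq hφ
end
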